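/- Let h : ℝ³ → ℝ be a smooth function satisfying the remarkable Fokker–Planck equation ∂_t h + x ∂_y h = ∂_x² h at every point of ℝ³. Then each of the four functions P⁰h, P¹h, P²h, P³h also satisfies the remarkable Fokker–Planck equation at every point of ℝ³; that is, P⁰, P¹, P², P³ are recursion (Lie-symmetry) operators of the equation. -/

import Mathlib

noncomputable section

/-- `u` (a smooth function of `(t,x,y)`, written curried) satisfies the remarkable
Fokker–Planck equation `∂_t u + x ∂_y u = ∂_x² u` everywhere. -/
def IsFPSol (u : ℝ → ℝ → ℝ → ℝ) : Prop :=
  ∀ t x y : ℝ,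
    deriv (fun s => u s x y) t + x * deriv (fun s => u t x s) y
      = deriv (fun s => deriv (fun r => u t r y) s) x

/-- `(P³h)(t,x,y) := 3t² h_x + t³ h_y − 3(y − tx) h`. -/
def P3f (h : ℝ → ℝ → ℝ → ℝ) : ℝ → ℝ → ℝ → ℝ := fun t x y =>
  3 * t ^ 2 * deriv (fun s => h t s y) x + t ^ 3 * deriv (fun s => h t x s) y
    - 3 * (y - t * x) * h t x y

/-- `(P²h)(t,x,y) := 2t h_x + t² h_y + x h`. -/
def P2f (h : ℝ → ℝ → ℝ → ℝ) : ℝ → ℝ → ℝ → ℝ := fun t x y =>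
  2 * t * deriv (fun s => h t s y) x + t ^ 2 * deriv (fun s => h t x s) y + x * h t x y

/-- `(P¹h)(t,x,y) := h_x + t h_y`. -/
def P1f (h : ℝ → ℝ → ℝ → ℝ) : ℝ → ℝ → ℝ → ℝ := fun t x y =>
  deriv (fun s => h t s y) x + t * deriv (fun s => h t x s) y

/-- `(P⁰h)(t,x,y) := h_y`. -/
def P0f (h : ℝ → ℝ → ℝ → ℝ) : ℝ → ℝ → ℝ → ℝ := fun t x y =>
  deriv (fun s => h t x s) y

namespace Stmt11Aux

abbrev E3 : Type := ℝ × ℝ × ℝ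

def Dv (v : E3) (F : E3 → ℝ) : E3 → ℝ := fun p => fderiv ℝ F p v

def D1 (F : E3 → ℝ) : E3 → ℝ := Dv ((1:ℝ), (0:ℝ), (0:ℝ)) F
def D2 (F : E3 → ℝ) : E3 → ℝ := Dv ((0:ℝ), (1:ℝ), (0:ℝ)) F
def D3 (F : E3 → ℝ) : E3 → ℝ := Dv ((0:ℝ), (0:ℝ), (1:ℝ)) F

variable {F A B C G : E3 → ℝ}

lemma Dv_smooth (hF : ContDiff ℝ (⊤ : ℕ∞) F) (v : E3) : ContDiff ℝ (⊤ : ℕ∞) (Dv v F) := by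
  exact (hF.fderiv_right (by simp)).clm_apply contDiff_const

lemma Dv_comm (hF : ContDiff ℝ (⊤ : ℕ∞) F) (v w : E3) : Dv v (Dv w F) = Dv w (Dv v F) := by
  funext p
  have hd : ∀ q, HasFDerivAt F (fderiv ℝ F q) q := fun q =>
    ((hF.differentiable (by simp)).differentiableAt).hasFDerivAt
  have hΦ : ContDiff ℝ (⊤ : ℕ∞) (fderiv ℝ F) := hF.fderiv_right (by simp)
  have hΦd : DifferentiableAt ℝ (fderiv ℝ F) p := (hΦ.differentiable (by simp)).differentiableAt
  have key : ∀ u : E3, fderiv ℝ (fun q => fderiv ℝ F q u) p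
      = (fderiv ℝ (fderiv ℝ F) p).flip u := by
    intro u
    have := fderiv_clm_apply (c := fderiv ℝ F) (u := fun _ => u) hΦd (differentiableAt_const u)
    simpa using this
  have hsymm := second_derivative_symmetric hd hΦd.hasFDerivAt v w
  show fderiv ℝ (fun q => fderiv ℝ F q w) p v = fderiv ℝ (fun q => fderiv ℝ F q v) p w
  rw [key, key]
  simpa using hsymm

lemma hd1 (hG : ContDiff ℝ (⊤ : ℕ∞) G) (t x y : ℝ) :
    HasDerivAt (fun s => G (s, x, y)) (D1 G (t, x, y)) t := by
  have hline : HasDerivAt (fun s : ℝ => ((s, x, y) : E3)) ((1:ℝ), (0:ℝ), (0:ℝ)) t :=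
    (hasDerivAt_id t).prodMk ((hasDerivAt_const t x).prodMk (hasDerivAt_const t y))
  exact ((hG.differentiable (by simp)) (t, x, y)).hasFDerivAt.comp_hasDerivAt t hline

lemma hd2 (hG : ContDiff ℝ (⊤ : ℕ∞) G) (t x y : ℝ) :
    HasDerivAt (fun s => G (t, s, y)) (D2 G (t, x, y)) x := by
  have hline : HasDerivAt (fun s : ℝ => ((t, s, y) : E3)) ((0:ℝ), (1:ℝ), (0:ℝ)) x :=
    (hasDerivAt_const x t).prodMk ((hasDerivAt_id x).prodMk (hasDerivAt_const x y))
  exact ((hG.differentiable (by simp)) (t, x, y)).hasFDerivAt.comp_hasDerivAt x hline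

lemma hd3 (hG : ContDiff ℝ (⊤ : ℕ∞) G) (t x y : ℝ) :
    HasDerivAt (fun s => G (t, x, s)) (D3 G (t, x, y)) y := by
  have hline : HasDerivAt (fun s : ℝ => ((t, x, s) : E3)) ((0:ℝ), (0:ℝ), (1:ℝ)) y :=
    (hasDerivAt_const y t).prodMk ((hasDerivAt_const y x).prodMk (hasDerivAt_id y))
  exact ((hG.differentiable (by simp)) (t, x, y)).hasFDerivAt.comp_hasDerivAt y hline

lemma comm12 (hF : ContDiff ℝ (⊤ : ℕ∞) F) : D1 (D2 F) = D2 (D1 F) := Dv_comm hF _ _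
lemma comm13 (hF : ContDiff ℝ (⊤ : ℕ∞) F) : D1 (D3 F) = D3 (D1 F) := Dv_comm hF _ _
lemma comm23 (hF : ContDiff ℝ (⊤ : ℕ∞) F) : D3 (D2 F) = D2 (D3 F) := Dv_comm hF _ _

lemma dsub2 (hA : ContDiff ℝ (⊤ : ℕ∞) A) (hB : ContDiff ℝ (⊤ : ℕ∞) B) :
    D2 (fun p => A p - p.2.1 * B p) = fun p => D2 A p - (B p + p.2.1 * D2 B p) := by
  have hS : ContDiff ℝ (⊤ : ℕ∞) (fun p : E3 => A p - p.2.1 * B p) :=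
    hA.sub ((contDiff_fst.comp contDiff_snd).mul hB)
  funext p; obtain ⟨t, x, y⟩ := p
  have h : HasDerivAt (fun s => A (t, s, y) - s * B (t, s, y))
      (D2 A (t, x, y) - (1 * B (t, x, y) + x * D2 B (t, x, y))) x :=
    (hd2 hA t x y).sub ((hasDerivAt_id x).mul (hd2 hB t x y))
  have h2 := (hd2 hS t x y).unique h
  rw [h2]; ring

lemma dsub3 (hA : ContDiff ℝ (⊤ : ℕ∞) A) (hB : ContDiff ℝ (⊤ : ℕ∞) B) :
    D3 (fun p => A p - p.2.1 * B p) = fun p => D3 A p - p.2.1 * D3 B p := by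
  have hS : ContDiff ℝ (⊤ : ℕ∞) (fun p : E3 => A p - p.2.1 * B p) :=
    hA.sub ((contDiff_fst.comp contDiff_snd).mul hB)
  funext p; obtain ⟨t, x, y⟩ := p
  have h : HasDerivAt (fun s => A (t, x, s) - x * B (t, x, s))
      (D3 A (t, x, y) - (0 * B (t, x, y) + x * D3 B (t, x, y))) y :=
    (hd3 hA t x y).sub ((hasDerivAt_const y x).mul (hd3 hB t x y))
  have h2 := (hd3 hS t x y).unique h
  rw [h2]; ring

lemma dlin1 (hA : ContDiff ℝ (⊤ : ℕ∞) A) (hB : ContDiff ℝ (⊤ : ℕ∞) B) :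
    D1 (fun p => A p + p.1 * B p) = fun p => D1 A p + (B p + p.1 * D1 B p) := by
  have hS : ContDiff ℝ (⊤ : ℕ∞) (fun p : E3 => A p + p.1 * B p) := hA.add (contDiff_fst.mul hB)
  funext p; obtain ⟨t, x, y⟩ := p
  have h : HasDerivAt (fun s => A (s, x, y) + s * B (s, x, y))
      (D1 A (t, x, y) + (1 * B (t, x, y) + t * D1 B (t, x, y))) t :=
    (hd1 hA t x y).add ((hasDerivAt_id t).mul (hd1 hB t x y))
  have h2 := (hd1 hS t x y).unique h
  rw [h2]; ring

lemma dlin2 (hA : ContDiff ℝ (⊤ : ℕ∞) A) (hB : ContDiff ℝ (⊤ : ℕ∞) B) :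
    D2 (fun p => A p + p.1 * B p) = fun p => D2 A p + p.1 * D2 B p := by
  have hS : ContDiff ℝ (⊤ : ℕ∞) (fun p : E3 => A p + p.1 * B p) := hA.add (contDiff_fst.mul hB)
  funext p; obtain ⟨t, x, y⟩ := p
  have h : HasDerivAt (fun s => A (t, s, y) + t * B (t, s, y))
      (D2 A (t, x, y) + (0 * B (t, x, y) + t * D2 B (t, x, y))) x :=
    (hd2 hA t x y).add ((hasDerivAt_const x t).mul (hd2 hB t x y))
  have h2 := (hd2 hS t x y).unique h
  rw [h2]; ring

lemma dlin3 (hA : ContDiff ℝ (⊤ : ℕ∞) A) (hB : ContDiff ℝ (⊤ : ℕ∞) B) :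
    D3 (fun p => A p + p.1 * B p) = fun p => D3 A p + p.1 * D3 B p := by
  have hS : ContDiff ℝ (⊤ : ℕ∞) (fun p : E3 => A p + p.1 * B p) := hA.add (contDiff_fst.mul hB)
  funext p; obtain ⟨t, x, y⟩ := p
  have h : HasDerivAt (fun s => A (t, x, s) + t * B (t, x, s))
      (D3 A (t, x, y) + (0 * B (t, x, y) + t * D3 B (t, x, y))) y :=
    (hd3 hA t x y).add ((hasDerivAt_const y t).mul (hd3 hB t x y))
  have h2 := (hd3 hS t x y).unique h
  rw [h2]; ring
variable {W : E3 → ℝ}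

lemma smq2 (hA : ContDiff ℝ (⊤ : ℕ∞) A) (hB : ContDiff ℝ (⊤ : ℕ∞) B) (hC : ContDiff ℝ (⊤ : ℕ∞) C) :
    ContDiff ℝ (⊤ : ℕ∞) (fun p : E3 => 2 * p.1 * A p + p.1 * p.1 * B p + p.2.1 * C p) :=
  (((contDiff_const.mul contDiff_fst).mul hA).add
    ((contDiff_fst.mul contDiff_fst).mul hB)).add
    ((contDiff_fst.comp contDiff_snd).mul hC)

lemma dq2_1 (hA : ContDiff ℝ (⊤ : ℕ∞) A) (hB : ContDiff ℝ (⊤ : ℕ∞) B) (hC : ContDiff ℝ (⊤ : ℕ∞) C) :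
    D1 (fun p => 2 * p.1 * A p + p.1 * p.1 * B p + p.2.1 * C p)
      = fun p => (2 * A p + 2 * p.1 * D1 A p) + (2 * p.1 * B p + p.1 * p.1 * D1 B p)
          + p.2.1 * D1 C p := by
  funext p; obtain ⟨t, x, y⟩ := p
  have h : HasDerivAt (fun s => 2 * s * A (s, x, y) + s * s * B (s, x, y) + x * C (s, x, y))
      (((2 * 1) * A (t, x, y) + 2 * t * D1 A (t, x, y))
        + ((1 * t + t * 1) * B (t, x, y) + t * t * D1 B (t, x, y))
        + (0 * C (t, x, y) + x * D1 C (t, x, y))) t :=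
    ((((hasDerivAt_id t).const_mul 2).mul (hd1 hA t x y)).add
      (((hasDerivAt_id t).mul (hasDerivAt_id t)).mul (hd1 hB t x y))).add
      ((hasDerivAt_const t x).mul (hd1 hC t x y))
  have h2 := (hd1 (smq2 hA hB hC) t x y).unique h
  rw [h2]; ring

lemma dq2_2 (hA : ContDiff ℝ (⊤ : ℕ∞) A) (hB : ContDiff ℝ (⊤ : ℕ∞) B) (hC : ContDiff ℝ (⊤ : ℕ∞) C) :
    D2 (fun p => 2 * p.1 * A p + p.1 * p.1 * B p + p.2.1 * C p)
      = fun p => 2 * p.1 * D2 A p + p.1 * p.1 * D2 B p + (C p + p.2.1 * D2 C p) := by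
  funext p; obtain ⟨t, x, y⟩ := p
  have h : HasDerivAt (fun s => 2 * t * A (t, s, y) + t * t * B (t, s, y) + s * C (t, s, y))
      ((0 * A (t, x, y) + 2 * t * D2 A (t, x, y))
        + (0 * B (t, x, y) + t * t * D2 B (t, x, y))
        + (1 * C (t, x, y) + x * D2 C (t, x, y))) x :=
    (((hasDerivAt_const x (2 * t)).mul (hd2 hA t x y)).add
      ((hasDerivAt_const x (t * t)).mul (hd2 hB t x y))).add
      ((hasDerivAt_id x).mul (hd2 hC t x y))
  have h2 := (hd2 (smq2 hA hB hC) t x y).unique h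
  rw [h2]; ring

lemma dq2_3 (hA : ContDiff ℝ (⊤ : ℕ∞) A) (hB : ContDiff ℝ (⊤ : ℕ∞) B) (hC : ContDiff ℝ (⊤ : ℕ∞) C) :
    D3 (fun p => 2 * p.1 * A p + p.1 * p.1 * B p + p.2.1 * C p)
      = fun p => 2 * p.1 * D3 A p + p.1 * p.1 * D3 B p + p.2.1 * D3 C p := by
  funext p; obtain ⟨t, x, y⟩ := p
  have h : HasDerivAt (fun s => 2 * t * A (t, x, s) + t * t * B (t, x, s) + x * C (t, x, s))
      ((0 * A (t, x, y) + 2 * t * D3 A (t, x, y))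
        + (0 * B (t, x, y) + t * t * D3 B (t, x, y))
        + (0 * C (t, x, y) + x * D3 C (t, x, y))) y :=
    (((hasDerivAt_const y (2 * t)).mul (hd3 hA t x y)).add
      ((hasDerivAt_const y (t * t)).mul (hd3 hB t x y))).add
      ((hasDerivAt_const y x).mul (hd3 hC t x y))
  have h2 := (hd3 (smq2 hA hB hC) t x y).unique h
  rw [h2]; ring

lemma dq2_2' (hA : ContDiff ℝ (⊤ : ℕ∞) A) (hB : ContDiff ℝ (⊤ : ℕ∞) B) (hC : ContDiff ℝ (⊤ : ℕ∞) C)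
    (hW : ContDiff ℝ (⊤ : ℕ∞) W) :
    D2 (fun p => 2 * p.1 * A p + p.1 * p.1 * B p + (C p + p.2.1 * W p))
      = fun p => 2 * p.1 * D2 A p + p.1 * p.1 * D2 B p
          + (D2 C p + (W p + p.2.1 * D2 W p)) := by
  have hS : ContDiff ℝ (⊤ : ℕ∞) (fun p : E3 => 2 * p.1 * A p + p.1 * p.1 * B p
      + (C p + p.2.1 * W p)) :=
    (((contDiff_const.mul contDiff_fst).mul hA).add
      ((contDiff_fst.mul contDiff_fst).mul hB)).add
      (hC.add ((contDiff_fst.comp contDiff_snd).mul hW))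
  funext p; obtain ⟨t, x, y⟩ := p
  have h : HasDerivAt
      (fun s => 2 * t * A (t, s, y) + t * t * B (t, s, y) + (C (t, s, y) + s * W (t, s, y)))
      ((0 * A (t, x, y) + 2 * t * D2 A (t, x, y))
        + (0 * B (t, x, y) + t * t * D2 B (t, x, y))
        + (D2 C (t, x, y) + (1 * W (t, x, y) + x * D2 W (t, x, y)))) x :=
    (((hasDerivAt_const x (2 * t)).mul (hd2 hA t x y)).add
      ((hasDerivAt_const x (t * t)).mul (hd2 hB t x y))).add
      ((hd2 hC t x y).add ((hasDerivAt_id x).mul (hd2 hW t x y)))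
  have h2 := (hd2 hS t x y).unique h
  rw [h2]; ring
lemma smq3 (hA : ContDiff ℝ (⊤ : ℕ∞) A) (hB : ContDiff ℝ (⊤ : ℕ∞) B) (hC : ContDiff ℝ (⊤ : ℕ∞) C) :
    ContDiff ℝ (⊤ : ℕ∞) (fun p : E3 => 3 * (p.1 * p.1) * A p + p.1 * (p.1 * p.1) * B p
      - 3 * (p.2.2 - p.1 * p.2.1) * C p) :=
  (((contDiff_const.mul (contDiff_fst.mul contDiff_fst)).mul hA).add
    ((contDiff_fst.mul (contDiff_fst.mul contDiff_fst)).mul hB)).sub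
    ((contDiff_const.mul ((contDiff_snd.comp contDiff_snd).sub
      (contDiff_fst.mul (contDiff_fst.comp contDiff_snd)))).mul hC)

lemma dq3_1 (hA : ContDiff ℝ (⊤ : ℕ∞) A) (hB : ContDiff ℝ (⊤ : ℕ∞) B) (hC : ContDiff ℝ (⊤ : ℕ∞) C) :
    D1 (fun p => 3 * (p.1 * p.1) * A p + p.1 * (p.1 * p.1) * B p
        - 3 * (p.2.2 - p.1 * p.2.1) * C p)
      = fun p => (6 * p.1 * A p + 3 * (p.1 * p.1) * D1 A p)
          + (3 * (p.1 * p.1) * B p + p.1 * (p.1 * p.1) * D1 B p)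
          - (3 * (p.2.2 - p.1 * p.2.1) * D1 C p - 3 * p.2.1 * C p) := by
  funext p; obtain ⟨t, x, y⟩ := p
  have h : HasDerivAt
      (fun s => 3 * (s * s) * A (s, x, y) + s * (s * s) * B (s, x, y)
        - 3 * (y - s * x) * C (s, x, y))
      (((3 * (1 * t + t * 1)) * A (t, x, y) + 3 * (t * t) * D1 A (t, x, y))
        + ((1 * (t * t) + t * (1 * t + t * 1)) * B (t, x, y)
            + t * (t * t) * D1 B (t, x, y))
        - ((3 * (0 - (1 * x + t * 0))) * C (t, x, y)
            + 3 * (y - t * x) * D1 C (t, x, y))) t :=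
    (((((hasDerivAt_id t).mul (hasDerivAt_id t)).const_mul 3).mul (hd1 hA t x y)).add
      (((hasDerivAt_id t).mul ((hasDerivAt_id t).mul (hasDerivAt_id t))).mul
        (hd1 hB t x y))).sub
      (((((hasDerivAt_const t y).sub ((hasDerivAt_id t).mul
        (hasDerivAt_const t x))).const_mul 3)).mul (hd1 hC t x y))
  have h2 := (hd1 (smq3 hA hB hC) t x y).unique h
  rw [h2]; ring

lemma dq3_2 (hA : ContDiff ℝ (⊤ : ℕ∞) A) (hB : ContDiff ℝ (⊤ : ℕ∞) B) (hC : ContDiff ℝ (⊤ : ℕ∞) C) :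
    D2 (fun p => 3 * (p.1 * p.1) * A p + p.1 * (p.1 * p.1) * B p
        - 3 * (p.2.2 - p.1 * p.2.1) * C p)
      = fun p => 3 * (p.1 * p.1) * D2 A p + p.1 * (p.1 * p.1) * D2 B p
          - (3 * (p.2.2 - p.1 * p.2.1) * D2 C p - 3 * p.1 * C p) := by
  funext p; obtain ⟨t, x, y⟩ := p
  have h : HasDerivAt
      (fun s => 3 * (t * t) * A (t, s, y) + t * (t * t) * B (t, s, y)
        - 3 * (y - t * s) * C (t, s, y))
      ((0 * A (t, x, y) + 3 * (t * t) * D2 A (t, x, y))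
        + (0 * B (t, x, y) + t * (t * t) * D2 B (t, x, y))
        - ((3 * (0 - (0 * x + t * 1))) * C (t, x, y)
            + 3 * (y - t * x) * D2 C (t, x, y))) x :=
    (((hasDerivAt_const x (3 * (t * t))).mul (hd2 hA t x y)).add
      ((hasDerivAt_const x (t * (t * t))).mul (hd2 hB t x y))).sub
      (((((hasDerivAt_const x y).sub ((hasDerivAt_const x t).mul
        (hasDerivAt_id x))).const_mul 3)).mul (hd2 hC t x y))
  have h2 := (hd2 (smq3 hA hB hC) t x y).unique h
  rw [h2]; ring

lemma dq3_3 (hA : ContDiff ℝ (⊤ : ℕ∞) A) (hB : ContDiff ℝ (⊤ : ℕ∞) B) (hC : ContDiff ℝ (⊤ : ℕ∞) C) :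
    D3 (fun p => 3 * (p.1 * p.1) * A p + p.1 * (p.1 * p.1) * B p
        - 3 * (p.2.2 - p.1 * p.2.1) * C p)
      = fun p => 3 * (p.1 * p.1) * D3 A p + p.1 * (p.1 * p.1) * D3 B p
          - (3 * (p.2.2 - p.1 * p.2.1) * D3 C p + 3 * C p) := by
  funext p; obtain ⟨t, x, y⟩ := p
  have h : HasDerivAt
      (fun s => 3 * (t * t) * A (t, x, s) + t * (t * t) * B (t, x, s)
        - 3 * (s - t * x) * C (t, x, s))
      ((0 * A (t, x, y) + 3 * (t * t) * D3 A (t, x, y))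
        + (0 * B (t, x, y) + t * (t * t) * D3 B (t, x, y))
        - ((3 * (1 - 0)) * C (t, x, y) + 3 * (y - t * x) * D3 C (t, x, y))) y :=
    (((hasDerivAt_const y (3 * (t * t))).mul (hd3 hA t x y)).add
      ((hasDerivAt_const y (t * (t * t))).mul (hd3 hB t x y))).sub
      (((((hasDerivAt_id y).sub (hasDerivAt_const y (t * x))).const_mul 3)).mul
        (hd3 hC t x y))
  have h2 := (hd3 (smq3 hA hB hC) t x y).unique h
  rw [h2]; ring

lemma dq3_2' (hA : ContDiff ℝ (⊤ : ℕ∞) A) (hB : ContDiff ℝ (⊤ : ℕ∞) B) (hC : ContDiff ℝ (⊤ : ℕ∞) C)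
    (hW : ContDiff ℝ (⊤ : ℕ∞) W) :
    D2 (fun p => 3 * (p.1 * p.1) * A p + p.1 * (p.1 * p.1) * B p
        - (3 * (p.2.2 - p.1 * p.2.1) * C p - 3 * p.1 * W p))
      = fun p => 3 * (p.1 * p.1) * D2 A p + p.1 * (p.1 * p.1) * D2 B p
          - ((3 * (p.2.2 - p.1 * p.2.1) * D2 C p - 3 * p.1 * C p)
              - 3 * p.1 * D2 W p) := by
  have hS : ContDiff ℝ (⊤ : ℕ∞) (fun p : E3 => 3 * (p.1 * p.1) * A p + p.1 * (p.1 * p.1) * B p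
      - (3 * (p.2.2 - p.1 * p.2.1) * C p - 3 * p.1 * W p)) :=
    (((contDiff_const.mul (contDiff_fst.mul contDiff_fst)).mul hA).add
      ((contDiff_fst.mul (contDiff_fst.mul contDiff_fst)).mul hB)).sub
      (((contDiff_const.mul ((contDiff_snd.comp contDiff_snd).sub
        (contDiff_fst.mul (contDiff_fst.comp contDiff_snd)))).mul hC).sub
        ((contDiff_const.mul contDiff_fst).mul hW))
  funext p; obtain ⟨t, x, y⟩ := p
  have h : HasDerivAt
      (fun s => 3 * (t * t) * A (t, s, y) + t * (t * t) * B (t, s, y)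
        - (3 * (y - t * s) * C (t, s, y) - 3 * t * W (t, s, y)))
      ((0 * A (t, x, y) + 3 * (t * t) * D2 A (t, x, y))
        + (0 * B (t, x, y) + t * (t * t) * D2 B (t, x, y))
        - (((3 * (0 - (0 * x + t * 1))) * C (t, x, y)
            + 3 * (y - t * x) * D2 C (t, x, y))
          - (0 * W (t, x, y) + 3 * t * D2 W (t, x, y)))) x :=
    (((hasDerivAt_const x (3 * (t * t))).mul (hd2 hA t x y)).add
      ((hasDerivAt_const x (t * (t * t))).mul (hd2 hB t x y))).sub
      ((((((hasDerivAt_const x y).sub ((hasDerivAt_const x t).mul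
        (hasDerivAt_id x))).const_mul 3)).mul (hd2 hC t x y)).sub
        ((hasDerivAt_const x (3 * t)).mul (hd2 hW t x y)))
  have h2 := (hd2 hS t x y).unique h
  rw [h2]; ring
def QQ1 (F : E3 → ℝ) : E3 → ℝ := fun q => D2 F q + q.1 * D3 F q
def QQ2 (F : E3 → ℝ) : E3 → ℝ := fun q =>
  2 * q.1 * D2 F q + q.1 * q.1 * D3 F q + q.2.1 * F q
def QQ3 (F : E3 → ℝ) : E3 → ℝ := fun q =>
  3 * (q.1 * q.1) * D2 F q + q.1 * (q.1 * q.1) * D3 F q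
    - 3 * (q.2.2 - q.1 * q.2.1) * F q

lemma smQQ1 (hF : ContDiff ℝ (⊤ : ℕ∞) F) : ContDiff ℝ (⊤ : ℕ∞) (QQ1 F) := by
  unfold QQ1
  exact (Dv_smooth hF _).add (contDiff_fst.mul (Dv_smooth hF _))

lemma smQQ2 (hF : ContDiff ℝ (⊤ : ℕ∞) F) : ContDiff ℝ (⊤ : ℕ∞) (QQ2 F) := by
  unfold QQ2
  exact smq2 (Dv_smooth hF _) (Dv_smooth hF _) hF

lemma smQQ3 (hF : ContDiff ℝ (⊤ : ℕ∞) F) : ContDiff ℝ (⊤ : ℕ∞) (QQ3 F) := by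
  unfold QQ3
  exact smq3 (Dv_smooth hF _) (Dv_smooth hF _) hF

variable (hF : ContDiff ℝ (⊤ : ℕ∞) F)
  (hsol : ∀ p : E3, D1 F p + p.2.1 * D3 F p = D2 (D2 F) p)

include hF hsol

omit hF in
lemma eqD1 : D1 F = fun p => D2 (D2 F) p - p.2.1 * D3 F p := by
  funext p; have := hsol p; linarith

lemma c12 : D1 (D2 F) = fun p => D2 (D2 (D2 F)) p - (D3 F p + p.2.1 * D2 (D3 F) p) := by
  have s3 : ContDiff ℝ (⊤ : ℕ∞) (D3 F) := Dv_smooth hF _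
  have s22 : ContDiff ℝ (⊤ : ℕ∞) (D2 (D2 F)) := Dv_smooth (Dv_smooth hF _) _
  rw [comm12 hF, eqD1 hsol, dsub2 s22 s3]

lemma c13 : D1 (D3 F) = fun p => D2 (D2 (D3 F)) p - p.2.1 * D3 (D3 F) p := by
  have s2 : ContDiff ℝ (⊤ : ℕ∞) (D2 F) := Dv_smooth hF _
  have s3 : ContDiff ℝ (⊤ : ℕ∞) (D3 F) := Dv_smooth hF _
  have s22 : ContDiff ℝ (⊤ : ℕ∞) (D2 (D2 F)) := Dv_smooth s2 _
  rw [comm13 hF, eqD1 hsol, dsub3 s22 s3, comm23 s2, comm23 hF]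

lemma main0 : ∀ p : E3, D1 (D3 F) p + p.2.1 * D3 (D3 F) p = D2 (D2 (D3 F)) p := by
  intro p
  have h13 := congrFun (c13 hF hsol) p
  rw [h13]; ring

lemma main1 : ∀ p : E3,
    D1 (QQ1 F) p + p.2.1 * D3 (QQ1 F) p = D2 (D2 (QQ1 F)) p := by
  intro p
  have s2 : ContDiff ℝ (⊤ : ℕ∞) (D2 F) := Dv_smooth hF _
  have s3 : ContDiff ℝ (⊤ : ℕ∞) (D3 F) := Dv_smooth hF _
  have s22 : ContDiff ℝ (⊤ : ℕ∞) (D2 (D2 F)) := Dv_smooth s2 _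
  have s23 : ContDiff ℝ (⊤ : ℕ∞) (D2 (D3 F)) := Dv_smooth s3 _
  unfold QQ1
  have e1 := congrFun (dlin1 s2 s3) p
  have e3 := congrFun (dlin3 s2 s3) p
  have eD2 := dlin2 s2 s3
  have e22 := congrFun (dlin2 s22 s23) p
  have h12 := congrFun (c12 hF hsol) p
  have h13 := congrFun (c13 hF hsol) p
  have hcm := congrFun (comm23 hF) p
  rw [eD2, e1, e3, e22, h12, h13, hcm]; ring

lemma main2 : ∀ p : E3,
    D1 (QQ2 F) p + p.2.1 * D3 (QQ2 F) p = D2 (D2 (QQ2 F)) p := by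
  intro p
  have s2 : ContDiff ℝ (⊤ : ℕ∞) (D2 F) := Dv_smooth hF _
  have s3 : ContDiff ℝ (⊤ : ℕ∞) (D3 F) := Dv_smooth hF _
  have s22 : ContDiff ℝ (⊤ : ℕ∞) (D2 (D2 F)) := Dv_smooth s2 _
  have s23 : ContDiff ℝ (⊤ : ℕ∞) (D2 (D3 F)) := Dv_smooth s3 _
  unfold QQ2
  have e1 := congrFun (dq2_1 s2 s3 hF) p
  have e3 := congrFun (dq2_3 s2 s3 hF) p
  have eD2 := dq2_2 s2 s3 hF
  have e22 := congrFun (dq2_2' s22 s23 hF s2) p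
  have h12 := congrFun (c12 hF hsol) p
  have h13 := congrFun (c13 hF hsol) p
  have h1F := congrFun (eqD1 hsol) p
  have hcm := congrFun (comm23 hF) p
  rw [eD2, e1, e3, e22, h12, h13, h1F, hcm]; ring

lemma main3 : ∀ p : E3,
    D1 (QQ3 F) p + p.2.1 * D3 (QQ3 F) p = D2 (D2 (QQ3 F)) p := by
  intro p
  have s2 : ContDiff ℝ (⊤ : ℕ∞) (D2 F) := Dv_smooth hF _
  have s3 : ContDiff ℝ (⊤ : ℕ∞) (D3 F) := Dv_smooth hF _
  have s22 : ContDiff ℝ (⊤ : ℕ∞) (D2 (D2 F)) := Dv_smooth s2 _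
  have s23 : ContDiff ℝ (⊤ : ℕ∞) (D2 (D3 F)) := Dv_smooth s3 _
  unfold QQ3
  have e1 := congrFun (dq3_1 s2 s3 hF) p
  have e3 := congrFun (dq3_3 s2 s3 hF) p
  have eD2 := dq3_2 s2 s3 hF
  have e22 := congrFun (dq3_2' s22 s23 s2 hF) p
  have h12 := congrFun (c12 hF hsol) p
  have h13 := congrFun (c13 hF hsol) p
  have h1F := congrFun (eqD1 hsol) p
  have hcm := congrFun (comm23 hF) p
  rw [eD2, e1, e3, e22, h12, h13, h1F, hcm]; ring
def FF (h : ℝ → ℝ → ℝ → ℝ) : E3 → ℝ := fun p => h p.1 p.2.1 p.2.2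

end Stmt11Aux

open Stmt11Aux in
/-- If a smooth `h : ℝ³ → ℝ` satisfies the remarkable Fokker–Planck
equation everywhere, then so do `P⁰h`, `P¹h`, `P²h` and `P³h`: the operators
`P⁰, P¹, P², P³` are recursion (Lie-symmetry) operators of the equation. -/
theorem stmt11 (h : ℝ → ℝ → ℝ → ℝ)
    (hsm : ContDiff ℝ (⊤ : ℕ∞) (fun p : ℝ × ℝ × ℝ => h p.1 p.2.1 p.2.2))
    (hsol : IsFPSol h) :
    IsFPSol (P0f h) ∧ IsFPSol (P1f h) ∧ IsFPSol (P2f h) ∧ IsFPSol (P3f h) := by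
  have hF : ContDiff ℝ (⊤ : ℕ∞) (FF h) := hsm
  have s2 : ContDiff ℝ (⊤ : ℕ∞) (D2 (FF h)) := Dv_smooth hF _
  have hsolF : ∀ p : E3, D1 (FF h) p + p.2.1 * D3 (FF h) p = D2 (D2 (FF h)) p := by
    rintro ⟨t, x, y⟩
    have a1 : deriv (fun s => h s x y) t = D1 (FF h) (t, x, y) := (hd1 hF t x y).deriv
    have a3 : deriv (fun s => h t x s) y = D3 (FF h) (t, x, y) := (hd3 hF t x y).deriv
    have ein : (fun s : ℝ => deriv (fun r => h t r y) s) = fun s => D2 (FF h) (t, s, y) :=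
      funext fun s => (hd2 hF t s y).deriv
    have a22 : deriv (fun s => D2 (FF h) (t, s, y)) x = D2 (D2 (FF h)) (t, x, y) :=
      (hd2 s2 t x y).deriv
    have h0 := hsol t x y
    rw [a1, a3, ein, a22] at h0
    exact h0
  refine ⟨?_, ?_, ?_, ?_⟩
  · -- P0
    intro t x y
    have s3 : ContDiff ℝ (⊤ : ℕ∞) (D3 (FF h)) := Dv_smooth hF _
    have s23 : ContDiff ℝ (⊤ : ℕ∞) (D2 (D3 (FF h))) := Dv_smooth s3 _
    have hq : ∀ t x y : ℝ, P0f h t x y = D3 (FF h) (t, x, y) := fun t x y =>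
      (hd3 hF t x y).deriv
    rw [show (fun s => P0f h s x y) = fun s => D3 (FF h) (s, x, y) from
          funext fun s => hq s x y,
        show (fun s => P0f h t x s) = fun s => D3 (FF h) (t, x, s) from
          funext fun s => hq t x s,
        show (fun s : ℝ => deriv (fun r => P0f h t r y) s)
            = fun s => D2 (D3 (FF h)) (t, s, y) from
          funext fun s => by
            rw [show (fun r => P0f h t r y) = fun r => D3 (FF h) (t, r, y) from
              funext fun r => hq t r y]
            exact (hd2 s3 t s y).deriv,
        (hd1 s3 t x y).deriv, (hd3 s3 t x y).deriv, (hd2 s23 t x y).deriv]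
    exact main0 hF hsolF (t, x, y)
  · -- P1
    intro t x y
    have sq : ContDiff ℝ (⊤ : ℕ∞) (QQ1 (FF h)) := smQQ1 hF
    have sq2 : ContDiff ℝ (⊤ : ℕ∞) (D2 (QQ1 (FF h))) := Dv_smooth sq _
    have hq : ∀ t x y : ℝ, P1f h t x y = QQ1 (FF h) (t, x, y) := by
      intro t x y
      have a2 : deriv (fun s => h t s y) x = D2 (FF h) (t, x, y) := (hd2 hF t x y).deriv
      have a3 : deriv (fun s => h t x s) y = D3 (FF h) (t, x, y) := (hd3 hF t x y).deriv
      have aF : h t x y = FF h (t, x, y) := rfl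
      show P1f h t x y = D2 (FF h) (t, x, y) + t * D3 (FF h) (t, x, y)
      unfold P1f
      rw [a2, a3]
    rw [show (fun s => P1f h s x y) = fun s => QQ1 (FF h) (s, x, y) from
          funext fun s => hq s x y,
        show (fun s => P1f h t x s) = fun s => QQ1 (FF h) (t, x, s) from
          funext fun s => hq t x s,
        show (fun s : ℝ => deriv (fun r => P1f h t r y) s)
            = fun s => D2 (QQ1 (FF h)) (t, s, y) from
          funext fun s => by
            rw [show (fun r => P1f h t r y) = fun r => QQ1 (FF h) (t, r, y) from
              funext fun r => hq t r y]
            exact (hd2 sq t s y).deriv,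
        (hd1 sq t x y).deriv, (hd3 sq t x y).deriv, (hd2 sq2 t x y).deriv]
    exact main1 hF hsolF (t, x, y)
  · -- P2
    intro t x y
    have sq : ContDiff ℝ (⊤ : ℕ∞) (QQ2 (FF h)) := smQQ2 hF
    have sq2 : ContDiff ℝ (⊤ : ℕ∞) (D2 (QQ2 (FF h))) := Dv_smooth sq _
    have hq : ∀ t x y : ℝ, P2f h t x y = QQ2 (FF h) (t, x, y) := by
      intro t x y
      have a2 : deriv (fun s => h t s y) x = D2 (FF h) (t, x, y) := (hd2 hF t x y).deriv
      have a3 : deriv (fun s => h t x s) y = D3 (FF h) (t, x, y) := (hd3 hF t x y).deriv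
      have aF : h t x y = FF h (t, x, y) := rfl
      show P2f h t x y = 2 * t * D2 (FF h) (t, x, y) + t * t * D3 (FF h) (t, x, y)
        + x * FF h (t, x, y)
      unfold P2f
      rw [a2, a3, aF]; ring
    rw [show (fun s => P2f h s x y) = fun s => QQ2 (FF h) (s, x, y) from
          funext fun s => hq s x y,
        show (fun s => P2f h t x s) = fun s => QQ2 (FF h) (t, x, s) from
          funext fun s => hq t x s,
        show (fun s : ℝ => deriv (fun r => P2f h t r y) s)
            = fun s => D2 (QQ2 (FF h)) (t, s, y) from
          funext fun s => by
            rw [show (fun r => P2f h t r y) = fun r => QQ2 (FF h) (t, r, y) from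
              funext fun r => hq t r y]
            exact (hd2 sq t s y).deriv,
        (hd1 sq t x y).deriv, (hd3 sq t x y).deriv, (hd2 sq2 t x y).deriv]
    exact main2 hF hsolF (t, x, y)
  · -- P3
    intro t x y
    have sq : ContDiff ℝ (⊤ : ℕ∞) (QQ3 (FF h)) := smQQ3 hF
    have sq2 : ContDiff ℝ (⊤ : ℕ∞) (D2 (QQ3 (FF h))) := Dv_smooth sq _
    have hq : ∀ t x y : ℝ, P3f h t x y = QQ3 (FF h) (t, x, y) := by
      intro t x y
      have a2 : deriv (fun s => h t s y) x = D2 (FF h) (t, x, y) := (hd2 hF t x y).deriv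
      have a3 : deriv (fun s => h t x s) y = D3 (FF h) (t, x, y) := (hd3 hF t x y).deriv
      have aF : h t x y = FF h (t, x, y) := rfl
      show P3f h t x y = 3 * (t * t) * D2 (FF h) (t, x, y)
        + t * (t * t) * D3 (FF h) (t, x, y) - 3 * (y - t * x) * FF h (t, x, y)
      unfold P3f
      rw [a2, a3, aF]; ring
    rw [show (fun s => P3f h s x y) = fun s => QQ3 (FF h) (s, x, y) from
          funext fun s => hq s x y,
        show (fun s => P3f h t x s) = fun s => QQ3 (FF h) (t, x, s) from
          funext fun s => hq t x s,
        show (fun s : ℝ => deriv (fun r => P3f h t r y) s)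
            = fun s => D2 (QQ3 (FF h)) (t, s, y) from
          funext fun s => by
            rw [show (fun r => P3f h t r y) = fun r => QQ3 (FF h) (t, r, y) from
              funext fun r => hq t r y]
            exact (hd2 sq t s y).deriv,
        (hd1 sq t x y).deriv, (hd3 sq t x y).deriv, (hd2 sq2 t x y).deriv]
    exact main3 hF hsolF (t, x, y)
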